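/- arXiv:2002.02053 — 7 statements merged into one kernel-verified Lean document; each statement's English description precedes it below -/
import Mathlib

section
/- Let R be a PID with field of fractions K, let Φ : K^d → K^d be a K-linear map, and let M = {x ∈ R^d : Φ(x) ∈ R^d} with φ : M → R^d the restriction of Φ. Define D_0 = M and D_{n+1} = {x ∈ M : φ(x) ∈ D_n}, and D_∞ = ⋂_n D_n. Then D_∞ = {0} if and only if the characteristic polynomial of Φ has no monic irreducible factor with coefficients in R. -/
open Polynomial
set_option synthInstance.maxHeartbeats 400000
set_option maxHeartbeats 1000000
set_option linter.unusedSectionVars false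


section EigLemmas

variable {K : Type*} [Field K] {d : ℕ}

lemma mulVec_pow_eigen {L : Type*} [CommRing L] (B : Matrix (Fin d) (Fin d) L)
    (w : Fin d → L) (lam : L) (h : B.mulVec w = lam • w) (n : ℕ) :
    (B ^ n).mulVec w = lam ^ n • w := by
  induction n with
  | zero => simp [Matrix.one_mulVec]
  | succ n ih =>
      rw [pow_succ, ← Matrix.mulVec_mulVec, h, Matrix.mulVec_smul, ih, smul_smul, pow_succ]
      rw [mul_comm]

lemma mulVec_aeval_eigen {L : Type*} [CommRing L] [Algebra K L] (B : Matrix (Fin d) (Fin d) L)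
    (w : Fin d → L) (lam : L) (h : B.mulVec w = lam • w) (f : K[X]) :
    (aeval B f).mulVec w = (aeval lam f) • w := by
  induction f using Polynomial.induction_on' with
  | add p q hp hq => rw [map_add, Matrix.add_mulVec, hp, hq, map_add, add_smul]
  | monomial n r =>
      rw [aeval_monomial, aeval_monomial, Algebra.algebraMap_eq_smul_one,
        smul_mul_assoc, one_mul, Matrix.smul_mulVec, mulVec_pow_eigen B w lam h n,
        mul_smul, algebraMap_smul]

lemma exists_eigvec (Φ : (Fin d → K) →ₗ[K] (Fin d → K)) (P : K[X]) (hirr : Irreducible P)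
    (hdvd : P ∣ LinearMap.charpoly Φ) :
    ∃ v : Fin d → K, v ≠ 0 ∧ (aeval Φ P) v = 0 := by
  classical
  set A := LinearMap.toMatrix' Φ with hA
  have hchar : A.charpoly = LinearMap.charpoly Φ := by
    rw [hA, ← LinearMap.toMatrix_eq_toMatrix']
    exact LinearMap.charpoly_toMatrix Φ (Pi.basisFun K (Fin d))
  haveI : Fact (Irreducible P) := ⟨hirr⟩
  set L := AdjoinRoot P with hL
  set lam : L := AdjoinRoot.root P with hlam
  set φ := algebraMap K L with hφ
  set B := A.map φ with hB
  obtain ⟨h, hh⟩ := hdvd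
  have hroot : (B.charpoly).eval lam = 0 := by
    rw [Matrix.charpoly_map, hchar, hh, Polynomial.map_mul, eval_mul]
    have : (P.map φ).eval lam = 0 := by
      rw [eval_map, hφ, AdjoinRoot.algebraMap_eq, AdjoinRoot.eval₂_root]
    rw [this, zero_mul]
  have hdet : (lam • (1 : Matrix (Fin d) (Fin d) L) - B).det = 0 := by
    have h1 : (evalRingHom lam) (B.charpoly) = 0 := hroot
    rw [Matrix.charpoly, RingHom.map_det] at h1
    convert h1 using 2
    ext i j
    by_cases hij : i = j
    · subst hij
      simp [Matrix.charmatrix_apply_eq, Matrix.one_apply]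
    · simp [Matrix.charmatrix_apply_ne _ _ _ hij, Matrix.one_apply_ne hij, hij]
  obtain ⟨w, hw0, hw⟩ := (Matrix.exists_mulVec_eq_zero_iff).mpr hdet
  have hBw : B.mulVec w = lam • w := by
    have := hw
    rw [Matrix.sub_mulVec, Matrix.smul_mulVec, Matrix.one_mulVec, sub_eq_zero] at this
    exact this.symm
  have haevalroot : (aeval lam P) = 0 := by
    rw [aeval_def, AdjoinRoot.algebraMap_eq, AdjoinRoot.eval₂_root]

  have hker : (aeval B P).mulVec w = 0 := by
    rw [mulVec_aeval_eigen B w lam hBw P, haevalroot, zero_smul]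
  have hdetB : (aeval B P).det = 0 := (Matrix.exists_mulVec_eq_zero_iff).mp ⟨w, hw0, hker⟩
  have hmap : aeval B P = (aeval A P).map φ := by
    have h0 : ((Algebra.ofId K L).mapMatrix :
        Matrix (Fin d) (Fin d) K →ₐ[K] Matrix (Fin d) (Fin d) L) A = B := by
      rw [AlgHom.mapMatrix_apply, hB]
      congr 1
    rw [← h0, Polynomial.aeval_algHom_apply, AlgHom.mapMatrix_apply]
    congr 1
  have hdetA : (aeval A P).det = 0 := by
    have hz : φ ((aeval A P).det) = 0 := by
      rw [RingHom.map_det, RingHom.mapMatrix_apply, ← hmap, hdetB]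
    exact (map_eq_zero_iff φ (RingHom.injective φ)).mp hz
  obtain ⟨v, hv0, hv⟩ := (Matrix.exists_mulVec_eq_zero_iff).mpr hdetA
  refine ⟨v, hv0, ?_⟩
  have : A = LinearMap.toMatrixAlgEquiv' Φ := rfl
  have h2 : aeval A P = LinearMap.toMatrixAlgEquiv' (aeval Φ P) := by
    rw [this]
    exact Polynomial.aeval_algHom_apply (LinearMap.toMatrixAlgEquiv' :
      ((Fin d → K) →ₗ[K] (Fin d → K)) ≃ₐ[K] Matrix (Fin d) (Fin d) K) Φ P
  have h3 : (aeval Φ P) v = (aeval A P).mulVec v := by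
    rw [h2]
    have := Matrix.toLin'_toMatrix' (aeval Φ P)
    calc (aeval Φ P) v = Matrix.toLin' (LinearMap.toMatrix' (aeval Φ P)) v := by rw [this]
    _ = (LinearMap.toMatrix' (aeval Φ P)).mulVec v := by rw [Matrix.toLin'_apply]
    _ = (LinearMap.toMatrixAlgEquiv' (aeval Φ P)).mulVec v := rfl
  rw [h3, hv]

end EigLemmas


section Ann

variable {R K : Type*} [CommRing R] [IsDomain R] [IsPrincipalIdealRing R]
  [Field K] [Algebra R K] [IsFractionRing R K] {d : ℕ}

lemma exists_monic_ann (Φ : (Fin d → K) →ₗ[K] (Fin d → K)) (x : Fin d → K)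
    (hx : ∀ k : ℕ, ∀ i, ∃ r : R, algebraMap R K r = ((Φ ^ k) x) i) :
    ∃ p : R[X], p.Monic ∧ (aeval Φ (p.map (algebraMap R K))) x = 0 := by
  classical
  set W : Submodule R (Fin d → K) :=
    Submodule.pi Set.univ (fun _ => LinearMap.range (Algebra.linearMap R K)) with hWdef
  have hWmem : ∀ y : Fin d → K, (∀ i, ∃ r : R, algebraMap R K r = y i) → y ∈ W := by
    intro y hy
    intro i _
    obtain ⟨r, hr⟩ := hy i
    exact ⟨r, hr⟩
  let g : (Fin d → R) →ₗ[R] (Fin d → K) :=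
    LinearMap.pi (fun j => (Algebra.linearMap R K).comp (LinearMap.proj j))
  have hgW : LinearMap.range g = W := by
    ext y
    constructor
    · rintro ⟨z, rfl⟩
      intro i _
      exact ⟨z i, rfl⟩
    · intro hy
      refine ⟨fun i => (hy i (Set.mem_univ i)).choose, ?_⟩
      funext i
      exact (hy i (Set.mem_univ i)).choose_spec
  haveI hWnoeth : IsNoetherian R W := by
    rw [← hgW]; infer_instance
  set N : Submodule R (Fin d → K) :=
    Submodule.span R (Set.range fun k : ℕ => (Φ ^ k) x) with hNdef
  have hNW : N ≤ W := by
    rw [hNdef, Submodule.span_le]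
    rintro _ ⟨k, rfl⟩
    exact hWmem _ (hx k)
  haveI : IsNoetherian R N := isNoetherian_of_le hNW
  have hmapsto : ∀ y ∈ N, (Φ.restrictScalars R) y ∈ N := by
    have hle : Submodule.map (Φ.restrictScalars R) N ≤ N := by
      rw [hNdef, Submodule.map_span, Submodule.span_le]
      rintro _ ⟨_, ⟨k, rfl⟩, rfl⟩
      refine Submodule.subset_span ⟨k + 1, ?_⟩
      show (Φ ^ (k + 1)) x = (Φ.restrictScalars R) ((Φ ^ k) x)
      rw [pow_succ', Module.End.mul_apply]
      rfl
    intro y hy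
    exact hle ⟨y, hy, rfl⟩
  set ψ : N →ₗ[R] N := (Φ.restrictScalars R).restrict hmapsto with hψdef
  obtain ⟨p, hpm, hp0⟩ := LinearMap.exists_monic_and_aeval_eq_zero R ψ
  refine ⟨p, hpm, ?_⟩
  have hx0 : x ∈ N := Submodule.subset_span ⟨0, by simp⟩
  have hpow : ∀ (n : ℕ) (y : N), (((ψ ^ n) y : N) : Fin d → K) = (Φ ^ n) (y : Fin d → K) := by
    intro n
    induction n with
    | zero => intro y; simp
    | succ n ih =>
        intro y
        rw [pow_succ, Module.End.mul_apply, pow_succ, Module.End.mul_apply]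
        have : ((ψ y : N) : Fin d → K) = Φ (y : Fin d → K) :=
          LinearMap.restrict_coe_apply _ _ _
        rw [ih, this]
  have key : ∀ (f : R[X]) (y : N),
      (((aeval ψ f) y : N) : Fin d → K) = (aeval Φ (f.map (algebraMap R K))) (y : Fin d → K) := by
    intro f
    induction f using Polynomial.induction_on' with
    | add a b ha hb =>
        intro y
        rw [map_add, LinearMap.add_apply, Polynomial.map_add, map_add, LinearMap.add_apply,
          Submodule.coe_add, ha y, hb y]
    | monomial n r =>
        intro y
        rw [aeval_monomial, Polynomial.map_monomial, aeval_monomial]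
        rw [Module.End.mul_apply, Module.algebraMap_end_apply, Submodule.coe_smul, hpow,
          Module.End.mul_apply, Module.algebraMap_end_apply, algebraMap_smul]
  have haeval : aeval ψ p = 0 := by
    rw [aeval_def]; exact hp0
  have := key p ⟨x, hx0⟩
  rw [haeval] at this
  simpa using this.symm

end Ann

/-- Let `R` be a PID with field of fractions `K`, `Φ : K^d → K^d`
a `K`-linear map, `M = {x ∈ R^d : Φ(x) ∈ R^d}` and `φ : M → R^d` the restriction of `Φ`.
With `D 0 = M`, `D (n+1) = {x ∈ M | Φ x ∈ D n}` and `D∞ = ⋂ n, D n`, one has `D∞ = {0}`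
iff the characteristic polynomial of `Φ` has no monic irreducible factor with
coefficients in `R`. -/
theorem stmt_0 (R K : Type*) [CommRing R] [IsDomain R] [IsPrincipalIdealRing R]
    [Field K] [Algebra R K] [IsFractionRing R K] (d : ℕ)
    (Φ : (Fin d → K) →ₗ[K] (Fin d → K))
    (M : Set (Fin d → K))
    (hM : M = {x | (∀ i, ∃ r : R, algebraMap R K r = x i) ∧
                   (∀ i, ∃ r : R, algebraMap R K r = Φ x i)})
    (D : ℕ → Set (Fin d → K))
    (hD0 : D 0 = M)
    (hDs : ∀ n, D (n + 1) = {x ∈ M | Φ x ∈ D n}) :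
    (⋂ n, D n) = {0} ↔
      ¬ ∃ q : R[X], q.Monic ∧ Irreducible q ∧
        q.map (algebraMap R K) ∣ LinearMap.charpoly Φ := by
  classical
  have φinj : Function.Injective (algebraMap R K) := IsFractionRing.injective R K
  have hDmem : ∀ n (x : Fin d → K),
      (∀ k : ℕ, ∀ i, ∃ r : R, algebraMap R K r = ((Φ ^ k) x) i) → x ∈ D n := by
    intro n
    induction n with
    | zero =>
        intro x hx
        rw [hD0, hM]
        refine ⟨fun i => by simpa using hx 0 i, fun i => by simpa [pow_one] using hx 1 i⟩
    | succ n ih =>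
        intro x hx
        rw [hDs n]
        refine ⟨?_, ih (Φ x) ?_⟩
        · rw [hM]
          exact ⟨fun i => by simpa using hx 0 i, fun i => by simpa [pow_one] using hx 1 i⟩
        · intro k i
          have h1 := hx (k + 1) i
          rwa [pow_succ, Module.End.mul_apply] at h1
  have hDmem' : ∀ (x : Fin d → K), (∀ n, x ∈ D n) →
      ∀ k : ℕ, ∀ i, ∃ r : R, algebraMap R K r = ((Φ ^ k) x) i := by
    have aux : ∀ k (x : Fin d → K), x ∈ D k →
        ∀ i, ∃ r : R, algebraMap R K r = ((Φ ^ k) x) i := by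
      intro k
      induction k with
      | zero =>
          intro x hx i
          rw [hD0, hM] at hx
          simpa using hx.1 i
      | succ k ih =>
          intro x hx i
          rw [hDs k] at hx
          have h1 := ih (Φ x) hx.2 i
          rwa [← Module.End.mul_apply, ← pow_succ] at h1
    intro x hx k i
    exact aux k x (hx k) i
  have hzero : ∀ n, (0 : Fin d → K) ∈ D n := by
    intro n
    exact hDmem n 0 (fun k i => ⟨0, by simp⟩)
  rw [Set.eq_singleton_iff_unique_mem]
  constructor
  · rintro ⟨-, huniq⟩ ⟨q, hqm, hqi, hqd⟩
    have hPirr : Irreducible (q.map (algebraMap R K)) :=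
      (hqm.irreducible_iff_irreducible_map_fraction_map).mp hqi
    obtain ⟨v, hv0, hv⟩ := exists_eigvec Φ (q.map (algebraMap R K)) hPirr hqd
    set P := q.map (algebraMap R K) with hPdef
    set m := q.natDegree with hmdef
    have hm0 : 0 < m := by
      by_contra hcon
      push_neg at hcon
      have hq1 : q = 1 := hqm.natDegree_eq_zero.mp (Nat.le_zero.mp hcon)
      exact hqi.not_isUnit (hq1 ▸ isUnit_one)
    have hPdeg : P.natDegree = m := hqm.natDegree_map _
    have hv' : (∑ i ∈ Finset.range (m + 1), P.coeff i • ((Φ ^ i) v)) = 0 := by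
      have h1 := hv
      rw [aeval_eq_sum_range, hPdeg] at h1
      rw [← h1]
      simp [LinearMap.sum_apply, LinearMap.smul_apply]
    have hexp : (Φ ^ m) v = -∑ i ∈ Finset.range m, P.coeff i • ((Φ ^ i) v) := by
      rw [Finset.sum_range_succ] at hv'
      have hc : P.coeff m = 1 := by
        rw [← hPdeg]
        exact (hqm.map _).coeff_natDegree
      rw [hc, one_smul] at hv'
      exact eq_neg_of_add_eq_zero_left (by rwa [add_comm])
    set S : Submodule R (Fin d → K) :=
      Submodule.span R (Set.range fun i : Fin m => (Φ ^ (i : ℕ)) v) with hSdef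
    have key : ∀ k, (Φ ^ k) v ∈ S := by
      intro k
      induction k using Nat.strong_induction_on with
      | _ k ih =>
        rcases lt_or_ge k m with hk | hk
        · exact Submodule.subset_span ⟨⟨k, hk⟩, rfl⟩
        · obtain ⟨j, rfl⟩ : ∃ j, k = j + m := ⟨k - m, by omega⟩
          have h2 : (Φ ^ (j + m)) v = (Φ ^ j) ((Φ ^ m) v) := by
            rw [pow_add, Module.End.mul_apply]
          rw [h2, hexp, map_neg, map_sum]
          refine Submodule.neg_mem _ (Submodule.sum_mem _ fun i hi => ?_)
          have him : i < m := Finset.mem_range.mp hi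
          rw [LinearMap.map_smul]
          have h3 : (Φ ^ j) ((Φ ^ i) v) = (Φ ^ (j + i)) v := by
            rw [pow_add, Module.End.mul_apply]
          rw [h3, coeff_map, algebraMap_smul]
          exact Submodule.smul_mem _ _ (ih (j + i) (by omega))
    obtain ⟨c, hc⟩ := IsLocalization.exist_integer_multiples (nonZeroDivisors R)
      (Finset.univ : Finset (Fin m × Fin d)) (fun p => ((Φ ^ (p.1 : ℕ)) v) p.2)
    set T : Submodule R (Fin d → K) :=
      (Submodule.pi Set.univ
        (fun _ : Fin d => LinearMap.range (Algebra.linearMap R K))).comap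
        ((c : R) • (LinearMap.id : (Fin d → K) →ₗ[R] (Fin d → K))) with hTdef
    have hST : S ≤ T := by
      rw [hSdef, Submodule.span_le]
      rintro _ ⟨i, rfl⟩
      simp only [hTdef, Submodule.mem_comap, SetLike.mem_coe, LinearMap.smul_apply,
        LinearMap.id_apply]
      intro j _
      obtain ⟨r, hr⟩ := hc ⟨i, j⟩ (Finset.mem_univ _)
      exact ⟨r, by simpa [Pi.smul_apply] using hr⟩
    set x := (c : R) • v with hxdef
    have hxmem : ∀ k : ℕ, ∀ i, ∃ r : R, algebraMap R K r = ((Φ ^ k) x) i := by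
      intro k i
      have h4 : (Φ ^ k) x = (c : R) • ((Φ ^ k) v) := by
        rw [hxdef, LinearMap.map_smul_of_tower]
      have h5 := hST (key k)
      simp only [hTdef, Submodule.mem_comap, LinearMap.smul_apply, LinearMap.id_apply] at h5
      obtain ⟨r, hr⟩ := h5 i (Set.mem_univ i)
      exact ⟨r, by rw [h4]; simpa using hr⟩
    have hxne : x ≠ 0 := by
      have hcK : algebraMap R K (c : R) ≠ 0 := by
        exact fun hz => nonZeroDivisors.coe_ne_zero c (φinj (by simpa using hz))
      have h6 : x = algebraMap R K (c : R) • v := by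
        rw [hxdef, algebraMap_smul]
      rw [h6]
      exact smul_ne_zero hcK hv0
    exact hxne (huniq x (Set.mem_iInter.mpr fun n => hDmem n x hxmem))
  · intro h
    refine ⟨Set.mem_iInter.mpr hzero, ?_⟩
    intro x hxI
    by_contra hx0
    have hx := hDmem' x (fun n => Set.mem_iInter.mp hxI n)
    obtain ⟨p, hpm, hann⟩ := exists_monic_ann Φ x hx
    set I : Ideal K[X] :=
      { carrier := {f : K[X] | (aeval Φ f) x = 0}
        add_mem' := by
          intro a b ha hb
          simp only [Set.mem_setOf_eq] at *
          rw [map_add, LinearMap.add_apply, ha, hb, add_zero]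
        zero_mem' := by simp
        smul_mem' := by
          intro cc f hf
          simp only [Set.mem_setOf_eq, smul_eq_mul] at *
          rw [map_mul, Module.End.mul_apply, hf, map_zero] } with hIdef
    haveI : I.IsPrincipal := IsPrincipalIdealRing.principal I
    set μ := Submodule.IsPrincipal.generator I with hμdef
    have hPI : p.map (algebraMap R K) ∈ I := hann
    have hcharI : LinearMap.charpoly Φ ∈ I := by
      show (aeval Φ (LinearMap.charpoly Φ)) x = 0
      rw [LinearMap.aeval_self_charpoly]
      rfl
    have hμP : μ ∣ p.map (algebraMap R K) :=
      (Submodule.IsPrincipal.mem_iff_generator_dvd I).mp hPI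
    have hμchar : μ ∣ LinearMap.charpoly Φ :=
      (Submodule.IsPrincipal.mem_iff_generator_dvd I).mp hcharI
    have hμ0 : μ ≠ 0 := by
      intro hz
      have : p.map (algebraMap R K) = 0 := by
        rw [hz] at hμP
        exact zero_dvd_iff.mp hμP
      exact (hpm.map (algebraMap R K)).ne_zero this
    have hμu : ¬IsUnit μ := by
      intro hu
      have h1 : (1 : K[X]) ∈ I := by
        have : I = ⊤ := I.eq_top_of_isUnit_mem (Submodule.IsPrincipal.generator_mem I) hu
        rw [this]
        trivial
      have : (aeval Φ (1 : K[X])) x = 0 := h1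
      rw [map_one] at this
      exact hx0 (by simpa using this)
    obtain ⟨g, hgi, hgdvd⟩ := WfDvdMonoid.exists_irreducible_factor hμu hμ0
    have hg0 : g ≠ 0 := hgi.ne_zero
    have hgm : (normalize g).Monic := Polynomial.monic_normalize hg0
    have hgirr : Irreducible (normalize g) := (normalize_associated g).symm.irreducible hgi
    have hgdvd' : normalize g ∣ μ := (normalize_associated g).dvd.trans hgdvd
    have hgP : normalize g ∣ p.map (algebraMap R K) := hgdvd'.trans hμP
    obtain ⟨q, hq⟩ := IsIntegrallyClosed.eq_map_mul_C_of_dvd K hpm hgP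
    rw [hgm.leadingCoeff, map_one, mul_one] at hq
    have hqm : q.Monic := monic_of_injective φinj (by rw [hq]; exact hgm)
    have hqirr : Irreducible q := by
      rw [hqm.irreducible_iff_irreducible_map_fraction_map (K := K), hq]
      exact hgirr
    exact h ⟨q, hqm, hqirr, by rw [hq]; exact hgdvd'.trans hμchar⟩
end

section
/- Let L be a 3-dimensional ℤ_p-Lie lattice with dim[L,L] = 1, and let φ : M → L be a virtual endomorphism of L (M a finite-index subalgebra). If φ is not injective, then φ is not simple; i.e., there exists a non-zero ideal I of L with I ⊆ M and φ(I) ⊆ I. -/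
/-!
Pick `x ≠ 0` in `ker φ`. If `ker φ` meets `D = span [L, L]` non-trivially, pick such an `x` in `D`:
since `D` is free of rank one, `D = R g` and `[w, g] ∈ R g` for all `w`, so `R x` is an ideal killed
by `φ`. Otherwise, for `m ∈ M` the bracket `[m, x]` lies in `ker φ ∩ D = 0`; as `M` has finite
index `n`, `n [w, x] = [n w, x] = 0` for all `w`, so `x` is central and again `R x` is an ideal
killed by `φ`.
-/

open Submodule

section

variable {R L : Type*} [CommRing R] [LieRing L] [LieAlgebra R L]

variable (R L) in
def bracketSpan : Submodule R L :=
  span R {z : L | ∃ x y : L, ⁅x, y⁆ = z}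

theorem lie_mem_bracketSpan (x y : L) : ⁅x, y⁆ ∈ bracketSpan R L :=
  subset_span ⟨x, y, rfl⟩

def lieIdealOfSpanSingleton (x : L) (hx : ∀ w : L, ⁅w, x⁆ ∈ R ∙ x) : LieIdeal R L where
  toSubmodule := R ∙ x
  lie_mem {w} := by
    intro m hm
    obtain ⟨c, rfl⟩ := mem_span_singleton.1 hm
    rw [lie_smul]
    exact smul_mem _ c (hx w)

theorem mem_lieIdealOfSpanSingleton_iff {x : L} (hx : ∀ w : L, ⁅w, x⁆ ∈ R ∙ x) {z : L} :
    z ∈ lieIdealOfSpanSingleton x hx ↔ ∃ c : R, c • x = z :=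
  mem_span_singleton

/-- The virtual endomorphism `φ` is simple iff `⊥` is its only invariant ideal. -/
def LieHom.IsInvariantIdeal {M : LieSubalgebra R L} (φ : M →ₗ⁅R⁆ L) (I : LieIdeal R L) :
    Prop :=
  (∀ z : L, z ∈ I → z ∈ M) ∧ ∀ z : M, (z : L) ∈ I → φ z ∈ I

theorem exists_invariantIdeal_of_mem_ker {M : LieSubalgebra R L} (φ : M →ₗ⁅R⁆ L) {x : M}
    (hx : x ≠ 0) (hφx : φ x = 0) (hlie : ∀ w : L, ⁅w, (x : L)⁆ ∈ R ∙ (x : L)) :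
    ∃ I : LieIdeal R L, I ≠ ⊥ ∧ φ.IsInvariantIdeal I := by
  refine ⟨lieIdealOfSpanSingleton (x : L) hlie, ?_, ?_, ?_⟩
  · intro hbot
    have hxI : (x : L) ∈ lieIdealOfSpanSingleton (x : L) hlie :=
      (mem_lieIdealOfSpanSingleton_iff hlie).2 ⟨1, one_smul R _⟩
    rw [hbot, LieSubmodule.mem_bot] at hxI
    exact hx (Subtype.ext hxI)
  · rintro z hz
    obtain ⟨c, rfl⟩ := (mem_lieIdealOfSpanSingleton_iff hlie).1 hz
    exact M.toSubmodule.smul_mem c x.2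
  · intro z hz
    obtain ⟨c, hc⟩ := (mem_lieIdealOfSpanSingleton_iff hlie).1 hz
    rw [show z = c • x from Subtype.ext hc.symm, map_smul, hφx, smul_zero]
    exact zero_mem _

theorem natCard_quotient_smul_mem (N : Submodule R L) (w : L) :
    (Nat.card (L ⧸ N) : R) • w ∈ N := by
  have h := card_nsmul_eq_zero' (x := (Submodule.Quotient.mk w : L ⧸ N))
  rwa [← Submodule.Quotient.mk_smul, Submodule.Quotient.mk_eq_zero, ← Nat.cast_smul_eq_nsmul R] at h

theorem lie_eq_zero_of_forall_mem_lie_eq_zero [IsDomain R] [CharZero R]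
    [Module.IsTorsionFree R L] (M : LieSubalgebra R L) (hM : Nat.card (L ⧸ M.toSubmodule) ≠ 0)
    {x : L} (hx : ∀ m : M, ⁅(m : L), x⁆ = 0) (w : L) : ⁅w, x⁆ = 0 := by
  have hn : (Nat.card (L ⧸ M.toSubmodule) : R) • ⁅w, x⁆ = 0 := by
    rw [← smul_lie]
    exact hx ⟨_, natCard_quotient_smul_mem M.toSubmodule w⟩
  exact (smul_eq_zero.1 hn).resolve_left (Nat.cast_ne_zero.2 hM)

theorem lie_eq_zero_of_ker_inf_bracketSpan_eq_bot {M : LieSubalgebra R L}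
    (φ : M →ₗ⁅R⁆ L) (hD : ∀ y : M, φ y = 0 → (y : L) ∈ bracketSpan R L → y = 0)
    {x : M} (hφx : φ x = 0) (m : M) : ⁅(m : L), (x : L)⁆ = 0 := by
  have hker : φ ⁅m, x⁆ = 0 := by rw [LieHom.map_lie, hφx, lie_zero]
  rw [← LieSubalgebra.coe_bracket, hD _ hker (lie_mem_bracketSpan _ _), ZeroMemClass.coe_zero]

theorem lie_mem_span_singleton_of_mem_bracketSpan [IsDomain R] [IsPrincipalIdealRing R]
    [Module.Free R L] [Module.Finite R L] (hD : Module.finrank R (bracketSpan R L) = 1)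
    {x : L} (hx : x ∈ bracketSpan R L) (w : L) : ⁅w, x⁆ ∈ R ∙ x := by
  obtain ⟨g, -, hg⟩ := finrank_eq_one_iff'.1 hD
  obtain ⟨c, hc⟩ := hg ⟨x, hx⟩
  obtain ⟨l, hl⟩ := hg ⟨⁅w, (g : L)⁆, lie_mem_bracketSpan _ _⟩
  rw [Subtype.ext_iff] at hc hl
  simp only [SetLike.val_smul] at hc hl
  refine mem_span_singleton.2 ⟨l, ?_⟩
  rw [← hc, lie_smul, ← hl, smul_comm]

end

theorem stmt_6_general (p : ℕ) [Fact p.Prime]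
    (L : Type*) [LieRing L] [LieAlgebra ℤ_[p] L]
    [Module.Free ℤ_[p] L] [Module.Finite ℤ_[p] L]
    (h1 : Module.finrank ℤ_[p]
      ↥(Submodule.span ℤ_[p] {z : L | ∃ x y : L, ⁅x, y⁆ = z}) = 1)
    (M : LieSubalgebra ℤ_[p] L)
    (hfin : 0 < Nat.card (L ⧸ M.toSubmodule))
    (φ : ↥M →ₗ⁅ℤ_[p]⁆ L)
    (hinj : ¬ Function.Injective φ) :
    ∃ I : LieIdeal ℤ_[p] L, I ≠ ⊥ ∧ (∀ z : L, z ∈ I → z ∈ M) ∧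
      ∀ z : ↥M, (z : L) ∈ I → φ z ∈ I := by
  obtain ⟨x, hx, hφx⟩ : ∃ x : M, x ≠ 0 ∧ φ x = 0 := by
    obtain ⟨a, b, hab, hne⟩ := Function.not_injective_iff.1 hinj
    exact ⟨a - b, sub_ne_zero.2 hne, by rw [map_sub, hab, sub_self]⟩
  by_cases hD : ∀ y : M, φ y = 0 → (y : L) ∈ bracketSpan ℤ_[p] L → y = 0
  · refine exists_invariantIdeal_of_mem_ker φ hx hφx fun w => ?_
    rw [lie_eq_zero_of_forall_mem_lie_eq_zero M hfin.ne'
      (lie_eq_zero_of_ker_inf_bracketSpan_eq_bot φ hD hφx) w]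
    exact zero_mem _
  · push Not at hD
    obtain ⟨y, hφy, hyD, hy⟩ := hD
    exact exists_invariantIdeal_of_mem_ker φ hy hφy
      (lie_mem_span_singleton_of_mem_bracketSpan h1 hyD)

/-- Let `L` be a 3-dimensional `ℤ_p`-Lie lattice with `dim [L,L] = 1`
and `φ : M → L` a virtual endomorphism (`M` a finite-index subalgebra). If `φ` is
not injective then `φ` is not simple: some non-zero ideal `I` of `L` satisfies
`I ⊆ M` and `φ(I) ⊆ I`. -/
theorem stmt_6 (p : ℕ) [Fact p.Prime]
    (L : Type*) [LieRing L] [LieAlgebra ℤ_[p] L]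
    [Module.Free ℤ_[p] L] [Module.Finite ℤ_[p] L]
    (h3 : Module.finrank ℤ_[p] L = 3)
    (h1 : Module.finrank ℤ_[p]
      ↥(Submodule.span ℤ_[p] {z : L | ∃ x y : L, ⁅x, y⁆ = z}) = 1)
    (M : LieSubalgebra ℤ_[p] L)
    (hfin : 0 < Nat.card (L ⧸ M.toSubmodule))
    (φ : ↥M →ₗ⁅ℤ_[p]⁆ L)
    (hinj : ¬ Function.Injective φ) :
    ∃ I : LieIdeal ℤ_[p] L, I ≠ ⊥ ∧ (∀ z : L, z ∈ I → z ∈ M) ∧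
      ∀ z : ↥M, (z : L) ∈ I → φ z ∈ I :=
  stmt_6_general p L h1 M hfin φ hinj
end

section
/- Let L be a 3-dimensional ℤ_p-Lie lattice with a basis (x₀,x₁,x₂) such that [x₁,x₂]=0, [x₀,x₁]=p^s(p^r x₁ + x₂), [x₀,x₂]=0 (s ∈ ℕ, r ∈ ℕ ∪ {∞}, p^∞ := 0), and let M ⊆ L be a subalgebra of index p. Then either Z(L) ⊆ M or [M,M] = [L,L]. -/
/-!
Bilinearity together with `[x₁,x₂] = [x₀,x₂] = 0` gives `[x,y] = (x₀y₁ - x₁y₀)[x₀,x₁]` in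
coordinates, so `x₂` is central, `Z(L) = ℤ_p x₂` (as `[x₀,x₁] ≠ 0`) and `[L,L] = ℤ_p [x₀,x₁]`.
If `x₂ ∈ M` then `Z(L) ⊆ M`. Otherwise `x₂` generates `L/M ≅ ℤ/p`, so `M` contains elements
`x₀ - n₀x₂` and `x₁ - n₁x₂`, whose bracket is `[x₀,x₁]` because `x₂` is central.
-/

theorem Submodule.exists_sub_zsmul_mem_of_card_quotient_prime {R M : Type*} [Ring R]
    [AddCommGroup M] [Module R M] {N : Submodule R M} {p : ℕ} [Fact p.Prime]
    (hidx : Nat.card (M ⧸ N) = p) {v : M} (hv : v ∉ N) (y : M) : ∃ n : ℤ, y - n • v ∈ N := by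
  have hgen := zmultiples_eq_top_of_prime_card hidx
    (g := Submodule.Quotient.mk v) ((Submodule.Quotient.mk_eq_zero N).not.mpr hv)
  obtain ⟨n, hn⟩ := AddSubgroup.mem_zmultiples_iff.mp (hgen ▸ AddSubgroup.mem_top _ :
    Submodule.Quotient.mk y ∈ AddSubgroup.zmultiples (Submodule.Quotient.mk v))
  exact ⟨n, (Submodule.Quotient.eq N).mp (by rw [← hn, Submodule.Quotient.mk_smul])⟩

theorem LieAlgebra.lie_sub_sub_of_mem_center {R L : Type*} [CommRing R] [LieRing L]
    [LieAlgebra R L] {z w : L} (hz : z ∈ LieAlgebra.center R L)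
    (hw : w ∈ LieAlgebra.center R L) (x y : L) : ⁅x - z, y - w⁆ = ⁅x, y⁆ := by
  have hzy : ⁅z, y⁆ = 0 := by rw [← lie_skew, hz y, neg_zero]
  simp [sub_lie, lie_sub, hzy, hw x, hw z]

namespace LieAlgebra.BasisFinThree

variable {R L : Type*} [CommRing R] [LieRing L] [LieAlgebra R L] (b : Module.Basis (Fin 3) R L)
  (h12 : ⁅b 1, b 2⁆ = 0) (h02 : ⁅b 0, b 2⁆ = 0)
include h12 h02

theorem lie_eq_smul (x y : L) :
    ⁅x, y⁆ = (b.repr x 0 * b.repr y 1 - b.repr x 1 * b.repr y 0) • ⁅b 0, b 1⁆ := by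
  have h21 : ⁅b 2, b 1⁆ = 0 := by rw [← lie_skew, h12, neg_zero]
  have h20 : ⁅b 2, b 0⁆ = 0 := by rw [← lie_skew, h02, neg_zero]
  have h10 : ⁅b 1, b 0⁆ = -⁅b 0, b 1⁆ := by rw [← lie_skew]
  conv_lhs => rw [← b.sum_repr x, ← b.sum_repr y]
  simp only [Fin.sum_univ_three, add_lie, lie_add, smul_lie, lie_smul, h12, h21, h20, h02, h10,
    lie_self, smul_zero, smul_neg, add_zero, zero_add, smul_smul]
  module

theorem basis_two_mem_center : b 2 ∈ LieAlgebra.center R L := fun x => by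
  simp [lie_eq_smul b h12 h02 x (b 2)]

theorem mem_span_basis_two_of_mem_center [IsDomain R] (hc : ⁅b 0, b 1⁆ ≠ 0) {z : L}
    (hz : z ∈ LieAlgebra.center R L) : z ∈ R ∙ b 2 := by
  have : Module.Free R L := .of_basis b
  have hz1 : b.repr z 1 = 0 := by
    have h := hz (b 0)
    rw [lie_eq_smul b h12 h02] at h
    simpa [Finsupp.single_apply, hc] using h
  have hz0 : b.repr z 0 = 0 := by
    have h := hz (b 1)
    rw [lie_eq_smul b h12 h02] at h
    simpa [Finsupp.single_apply, hc] using h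
  have hsum := b.sum_repr z
  rw [Fin.sum_univ_three, hz0, hz1, zero_smul, zero_smul, zero_add, zero_add] at hsum
  exact Submodule.mem_span_singleton.mpr ⟨_, hsum⟩

theorem lie_mem_span_lie_zero_one (x y : L) : ⁅x, y⁆ ∈ R ∙ ⁅b 0, b 1⁆ :=
  Submodule.mem_span_singleton.mpr ⟨_, (lie_eq_smul b h12 h02 x y).symm⟩

end LieAlgebra.BasisFinThree

open LieAlgebra.BasisFinThree in
theorem stmt_8_general (p : ℕ) [Fact p.Prime] (s : ℕ) (t : ℤ_[p])
    (L : Type*) [LieRing L] [LieAlgebra ℤ_[p] L]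
    (b : Module.Basis (Fin 3) ℤ_[p] L)
    (h12 : ⁅b 1, b 2⁆ = 0)
    (h01 : ⁅b 0, b 1⁆ = (p : ℤ_[p]) ^ s • (t • b 1 + b 2))
    (h02 : ⁅b 0, b 2⁆ = 0)
    (M : LieSubalgebra ℤ_[p] L)
    (hidx : Nat.card (L ⧸ M.toSubmodule) = p) :
    (∀ z : L, z ∈ LieAlgebra.center ℤ_[p] L → z ∈ M) ∨
      Submodule.span ℤ_[p] {z : L | ∃ x ∈ M, ∃ y ∈ M, ⁅x, y⁆ = z} =
        Submodule.span ℤ_[p] {z : L | ∃ x y : L, ⁅x, y⁆ = z} := by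
  by_cases hb2 : b 2 ∈ M
  · have hc : ⁅b 0, b 1⁆ ≠ 0 := fun h => by
      simpa [h01, Finsupp.single_apply, (Fact.out : p.Prime).ne_zero] using
        congrArg (b.repr · 2) h
    left
    intro z hz
    obtain ⟨a, rfl⟩ :=
      Submodule.mem_span_singleton.mp (mem_span_basis_two_of_mem_center b h12 h02 hc hz)
    exact M.smul_mem a hb2
  · right
    obtain ⟨n₀, hn₀⟩ := Submodule.exists_sub_zsmul_mem_of_card_quotient_prime hidx hb2 (b 0)
    obtain ⟨n₁, hn₁⟩ := Submodule.exists_sub_zsmul_mem_of_card_quotient_prime hidx hb2 (b 1)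
    have hcentral := basis_two_mem_center b h12 h02
    refine le_antisymm (Submodule.span_mono fun z ⟨x, _, y, _, hxy⟩ => ⟨x, y, hxy⟩) ?_
    rw [Submodule.span_le]
    rintro _ ⟨x, y, rfl⟩
    refine Submodule.span_singleton_le_iff_mem _ _ |>.mpr (Submodule.subset_span ?_)
      (lie_mem_span_lie_zero_one b h12 h02 x y)
    exact ⟨_, hn₀, _, hn₁, LieAlgebra.lie_sub_sub_of_mem_center
      (zsmul_mem hcentral n₀) (zsmul_mem hcentral n₁) _ _⟩

/-- Let `L` be the 3-dimensional `ℤ_p`-Lie lattice with basis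
`(x₀,x₁,x₂)`, `[x₁,x₂]=0`, `[x₀,x₁]=p^s(t x₁ + x₂)` (where `t = p^r` for some
`r ∈ ℕ`, or `t = 0`, encoding `r = ∞`), `[x₀,x₂]=0`, and let `M ⊆ L` be a subalgebra
of index `p`. Then `Z(L) ⊆ M` or `[M,M] = [L,L]`. -/
theorem stmt_8 (p : ℕ) [Fact p.Prime] (s : ℕ) (t : ℤ_[p])
    (ht : (∃ r : ℕ, t = (p : ℤ_[p]) ^ r) ∨ t = 0)
    (L : Type*) [LieRing L] [LieAlgebra ℤ_[p] L]
    (b : Module.Basis (Fin 3) ℤ_[p] L)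
    (h12 : ⁅b 1, b 2⁆ = 0)
    (h01 : ⁅b 0, b 1⁆ = (p : ℤ_[p]) ^ s • (t • b 1 + b 2))
    (h02 : ⁅b 0, b 2⁆ = 0)
    (M : LieSubalgebra ℤ_[p] L)
    (hidx : Nat.card (L ⧸ M.toSubmodule) = p) :
    (∀ z : L, z ∈ LieAlgebra.center ℤ_[p] L → z ∈ M) ∨
      Submodule.span ℤ_[p] {z : L | ∃ x ∈ M, ∃ y ∈ M, ⁅x, y⁆ = z} =
        Submodule.span ℤ_[p] {z : L | ∃ x y : L, ⁅x, y⁆ = z} :=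
  stmt_8_general p s t L b h12 h01 h02 M hidx
end

section
/- Fix d ≥ 2 and a ∈ ℤ_p; let L^d(a) be the ℤ_p-Lie lattice with basis (x₀,...,x_{d-1}) and brackets [x_i,x_j]=0, [x₀,x_i] = a·x_i for 1 ≤ i,j ≤ d−1. Then every ℤ_p-submodule of L^d(a) is a Lie subalgebra, and every subalgebra generated by two elements has dimension at most 2. -/
/-!
The bracket of `L^d(a)` is `⁅x, y⁆ = a • (c x • y - c y • x)`, where `c` is the `x₀`-coordinate:
both sides are bilinear and agree on the basis. So `⁅x, y⁆` always lies in the span of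
`x` and `y`, whence every submodule is closed under the bracket, the Lie span of a set equals its
linear span, and the Lie span of two elements has rank at most `2`.
-/

open Submodule

section

variable {R L : Type*} [CommRing R] [LieRing L] [LieAlgebra R L]

theorem lie_mem_of_forall_lie_mem_span_pair (h : ∀ x y : L, ⁅x, y⁆ ∈ span R {x, y})
    (N : Submodule R L) {x y : L} (hx : x ∈ N) (hy : y ∈ N) : ⁅x, y⁆ ∈ N :=
  span_le.mpr (Set.insert_subset hx (Set.singleton_subset_iff.mpr hy)) (h x y)

theorem LieSubalgebra.coe_lieSpan_eq_span_of_forall_lie_mem_span_pair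
    (h : ∀ x y : L, ⁅x, y⁆ ∈ span R {x, y}) (s : Set L) :
    (LieSubalgebra.lieSpan R L s : Submodule R L) = span R s := by
  refine le_antisymm ?_ (LieSubalgebra.submodule_span_le_lieSpan)
  change _ ≤ ({ span R s with
    lie_mem' := lie_mem_of_forall_lie_mem_span_pair h _ } : LieSubalgebra R L)
  rw [LieSubalgebra.lieSpan_le]
  exact subset_span

theorem finrank_lieSpan_pair_le_two [StrongRankCondition R]
    (h : ∀ x y : L, ⁅x, y⁆ ∈ span R {x, y}) (x y : L) :
    Module.finrank R (LieSubalgebra.lieSpan R L {x, y}).toSubmodule ≤ 2 := by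
  classical
  rw [LieSubalgebra.coe_lieSpan_eq_span_of_forall_lie_mem_span_pair h, ← Finset.coe_pair]
  exact (finrank_span_finset_le_card _).trans Finset.card_le_two

theorem lie_eq_smul_coord_smul_sub {ι : Type*} (b : Module.Basis ι R L) (i₀ : ι) (a : R)
    (hab : ∀ i j, i ≠ i₀ → j ≠ i₀ → ⁅b i, b j⁆ = 0)
    (h0 : ∀ i, i ≠ i₀ → ⁅b i₀, b i⁆ = a • b i) (x y : L) :
    ⁅x, y⁆ = a • (b.coord i₀ x • y - b.coord i₀ y • x) := by
  classical
  let B : L →ₗ[R] L →ₗ[R] L := (LinearMap.lsmul R L).comp (b.coord i₀)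
  suffices (LieAlgebra.ad R L : L →ₗ[R] Module.End R L) = a • (B - B.flip) by
    simpa [B] using LinearMap.congr_fun (LinearMap.congr_fun this x) y
  refine LinearMap.ext_basis b b fun i j => ?_
  have hcoord : ∀ k, b.coord i₀ (b k) = if k = i₀ then 1 else 0 := fun k => by
    simp [Finsupp.single_apply, eq_comm]
  simp only [LinearMap.smul_apply, LinearMap.sub_apply, LinearMap.flip_apply, B,
    LinearMap.comp_apply, LinearMap.lsmul_apply, hcoord]
  change ⁅b i, b j⁆ = _
  rcases eq_or_ne i i₀ with hi | hi <;> rcases eq_or_ne j i₀ with hj | hj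
  · simp [hi, hj]
  · simp [hi, hj, h0 j hj]
  · rw [hj, ← lie_skew, h0 i hi]
    simp [hi]
  · simp [hi, hj, hab i j hi hj]

end

/-- In `L^d(a)` (basis `(x₀,…,x_{d−1})`, `[x_i,x_j]=0`,
`[x₀,x_i]=a·x_i` for `i,j ≥ 1`), every `ℤ_p`-submodule is a Lie subalgebra, and
every subalgebra generated by two elements has dimension at most 2. -/
theorem stmt_9 (p : ℕ) [Fact p.Prime] (d : ℕ) (hd : 2 ≤ d) (a : ℤ_[p])
    (L : Type*) [LieRing L] [LieAlgebra ℤ_[p] L]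
    (b : Module.Basis (Fin d) ℤ_[p] L)
    (hab : ∀ i j : Fin d, i ≠ ⟨0, by omega⟩ → j ≠ ⟨0, by omega⟩ → ⁅b i, b j⁆ = 0)
    (h0 : ∀ i : Fin d, i ≠ ⟨0, by omega⟩ → ⁅b ⟨0, by omega⟩, b i⁆ = a • b i) :
    (∀ N : Submodule ℤ_[p] L, ∀ x ∈ N, ∀ y ∈ N, ⁅x, y⁆ ∈ N) ∧
    (∀ x y : L, Module.finrank ℤ_[p]
      ↥(LieSubalgebra.lieSpan ℤ_[p] L {x, y}).toSubmodule ≤ 2) := by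
  have hspan : ∀ x y : L, ⁅x, y⁆ ∈ span ℤ_[p] {x, y} := fun x y => by
    rw [lie_eq_smul_coord_smul_sub b _ a hab h0]
    exact smul_mem _ _ (sub_mem (smul_mem _ _ (subset_span (by simp)))
      (smul_mem _ _ (subset_span (by simp))))
  exact ⟨fun N _ hx _ hy => lie_mem_of_forall_lie_mem_span_pair hspan N hx hy,
    finrank_lieSpan_pair_le_two hspan⟩
end

section
/- Let L be a (d+1)-dimensional ℤ_p-Lie lattice with good basis (x₀,...,x_d) and matrix A (i.e., [x_i,x_j]=0 and [x₀,x_i]=Σ_l A_{li}x_l), and let M ⊆ L be a finite-index submodule with basis (y₀,...,y_d) whose change-of-basis matrix Ū = (U_{αβ}) (y_β = Σ_α U_{αβ}x_α) satisfies U_{0i} = 0 for all i ∈ {1,...,d}. Let U = (U_{ij})_{1 ≤ i,j ≤ d} and B = U₀₀ U^{−1} A U ∈ gl_d(ℚ_p). Then M is a Lie subalgebra of L if and only if B has all entries in ℤ_p, and in that case (y₀,...,y_d) is a good basis of M with matrix B. -/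
/-!
The vectors `y₁,…,y_d` lie in the abelian ideal spanned by `x₁,…,x_d`, so the only brackets of
basis vectors of `M` that can leave `M` are `[y₀, y_i] = U₀₀ Σ_m (AU)_{mi} x_m`. A vector
`Σ_m w_m x_m` lies in `M` iff `w = U z` with `z` integral: its `y₀`-coordinate `c₀` satisfies
`U₀₀ c₀ = 0`, and `U₀₀ ≠ 0` because `det Ū = U₀₀ det U` is nonzero by linear independence of the
`y_β`. Hence `M` is a subalgebra iff `U Z = U₀₀ A U` has a solution over `ℤ_p`, i.e. iff
`B = U⁻¹ (U₀₀ A U)` is integral, and then `[y₀, y_i] = Σ_l B_{li} y_l`.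
-/

open Matrix

section Module

variable {R N : Type*} [CommRing R] [AddCommGroup N] [Module R N] {ι κ : Type*} [Fintype ι]
  [Fintype κ]

theorem sum_smul_sum_smul_eq_sum_mulVec_smul (x : κ → N) (U : Matrix κ ι R) (c : ι → R) :
    ∑ j, c j • ∑ i, U i j • x i = ∑ i, (U *ᵥ c) i • x i := by
  simp only [Finset.smul_sum, smul_smul, mulVec, dotProduct, Finset.sum_smul]
  rw [Finset.sum_comm]
  exact Finset.sum_congr rfl fun i _ => Finset.sum_congr rfl fun j _ => by rw [mul_comm]

theorem Submodule.mem_iff_exists_sum_smul_basis (M : Submodule R N) (y : Module.Basis ι R M)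
    {u : N} : u ∈ M ↔ ∃ c : ι → R, u = ∑ i, c i • (y i : N) := by
  refine ⟨fun hu => ⟨y.repr ⟨u, hu⟩, ?_⟩, ?_⟩
  · have := congrArg Subtype.val (y.sum_repr ⟨u, hu⟩)
    simp only [Submodule.coe_sum, Submodule.coe_smul] at this
    exact this.symm
  · rintro ⟨c, rfl⟩
    exact M.sum_mem fun i _ => M.smul_mem _ (y i).2

theorem Module.Basis.sum_smul_injective (b : Module.Basis ι R N) {f g : ι → R}
    (h : ∑ i, f i • b i = ∑ i, g i • b i) : f = g :=
  b.equivFun.symm.injective (by simpa only [Module.Basis.equivFun_symm_apply])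

end Module

theorem Matrix.det_eq_mul_det_submatrix_succ_of_row_zero {R : Type*} [CommRing R] {n : ℕ}
    (U : Matrix (Fin (n + 1)) (Fin (n + 1)) R) (hU : ∀ j : Fin n, U 0 j.succ = 0) :
    U.det = U 0 0 * (U.submatrix Fin.succ Fin.succ).det := by
  rw [det_succ_row_zero, Fin.sum_univ_succ]
  simp [hU]

theorem Matrix.mul_eq_iff_map_eq_inv_mul {R K : Type*} [CommRing R] [Field K] {n : Type*}
    [Fintype n] [DecidableEq n] (f : R →+* K) (hf : Function.Injective f) {U C Z : Matrix n n R}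
    (hU : f U.det ≠ 0) : U * Z = C ↔ Z.map f = (U.map f)⁻¹ * C.map f := by
  have hunit : IsUnit (U.map f).det := by
    rw [isUnit_iff_ne_zero, ← RingHom.mapMatrix_apply, ← RingHom.map_det]; exact hU
  have := (U.map f).invertibleOfIsUnitDet hunit
  rw [eq_comm (a := Z.map f), inv_mul_eq_iff_eq_mul_of_invertible, ← Matrix.map_mul,
    (map_injective hf).eq_iff, eq_comm]

theorem Matrix.exists_mul_eq_iff_forall_exists_mulVec_eq {R : Type*} [CommRing R]
    {m n o : Type*} [Fintype n] {V : Matrix m n R} {C : Matrix m o R} :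
    (∃ Z : Matrix n o R, V * Z = C) ↔ ∀ k, ∃ z, V *ᵥ z = fun i => C i k := by
  refine ⟨fun ⟨Z, hZ⟩ k => ⟨fun l => Z l k, ?_⟩, fun h => ?_⟩
  · subst hZ; ext i; simp [mul_apply, mulVec, dotProduct]
  · choose z hz using h
    refine ⟨of fun l k => z k l, ?_⟩
    ext i k
    simpa [mul_apply, mulVec, dotProduct] using congrFun (hz k) i

theorem Matrix.exists_map_eq_iff {R K m n : Type*} (f : R → K) (B : Matrix m n K) :
    (∃ Z : Matrix m n R, Z.map f = B) ↔ ∀ i j, ∃ r, f r = B i j := by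
  refine ⟨fun ⟨Z, hZ⟩ i j => ⟨Z i j, by rw [← hZ]; rfl⟩, fun h => ?_⟩
  choose Z hZ using h
  exact ⟨of Z, ext hZ⟩

section Lie

variable {R L : Type*} [CommRing R] [LieRing L] [LieAlgebra R L] {d : ℕ}

structure GoodBrackets (x : Fin (d + 1) → L) (A : Matrix (Fin d) (Fin d) R) : Prop where
  lie_succ_succ : ∀ i j : Fin d, ⁅x i.succ, x j.succ⁆ = 0
  lie_zero_succ : ∀ i : Fin d, ⁅x 0, x i.succ⁆ = ∑ l, A l i • x l.succ

theorem GoodBrackets.lie_sum_smul_sum_smul_succ {x : Fin (d + 1) → L}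
    {A : Matrix (Fin d) (Fin d) R} (hx : GoodBrackets x A) (f : Fin (d + 1) → R)
    (g : Fin d → R) :
    ⁅∑ α, f α • x α, ∑ m, g m • x m.succ⁆ = f 0 • ∑ m, (A *ᵥ g) m • x m.succ := by
  have htail : ∑ k : Fin d, ⁅f k.succ • x k.succ, ∑ m, g m • x m.succ⁆ = 0 := by
    simp [lie_sum, lie_smul, smul_lie, hx.lie_succ_succ]
  rw [Fin.sum_univ_succ, add_lie, sum_lie, htail, add_zero, smul_lie, lie_sum]
  simp only [lie_smul, hx.lie_zero_succ]
  exact congrArg (f 0 • ·) (sum_smul_sum_smul_eq_sum_mulVec_smul (fun l => x l.succ) A g)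

theorem Submodule.lie_mem_of_lie_basis_mem {ι : Type*} [Fintype ι] (M : Submodule R L)
    (y : Module.Basis ι R M) (h : ∀ i j, ⁅(y i : L), (y j : L)⁆ ∈ M) {u v : L} (hu : u ∈ M)
    (hv : v ∈ M) : ⁅u, v⁆ ∈ M := by
  obtain ⟨c, rfl⟩ := (M.mem_iff_exists_sum_smul_basis y).1 hu
  obtain ⟨c', rfl⟩ := (M.mem_iff_exists_sum_smul_basis y).1 hv
  rw [sum_lie_sum]
  exact M.sum_mem fun i _ => M.sum_mem fun j _ => by
    rw [smul_lie, lie_smul]; exact M.smul_mem _ (M.smul_mem _ (h i j))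

theorem Submodule.lie_mem_iff_lie_zero_succ_mem (M : Submodule R L)
    (y : Module.Basis (Fin (d + 1)) R M)
    (hy : ∀ i j : Fin d, ⁅(y i.succ : L), (y j.succ : L)⁆ = 0) :
    (∀ u ∈ M, ∀ v ∈ M, ⁅u, v⁆ ∈ M) ↔ ∀ i : Fin d, ⁅(y 0 : L), (y i.succ : L)⁆ ∈ M := by
  refine ⟨fun h i => h _ (y 0).2 _ (y i.succ).2, fun h u hu v hv => ?_⟩
  refine M.lie_mem_of_lie_basis_mem y (fun α β => ?_) hu hv
  cases α using Fin.cases <;> cases β using Fin.cases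
  · simp
  · exact h _
  · rw [← lie_skew]; exact M.neg_mem (h _)
  · rw [hy]; exact M.zero_mem

end Lie

section Sublattice

variable {R L : Type*} [CommRing R] [AddCommGroup L] [Module R L] {d : ℕ}
  {b : Module.Basis (Fin (d + 1)) R L} {M : Submodule R L} {y : Module.Basis (Fin (d + 1)) R M}
  {U : Matrix (Fin (d + 1)) (Fin (d + 1)) R}

theorem sum_smul_coe_basis_eq_sum_mulVec_smul (hU : ∀ β, (y β : L) = ∑ α, U α β • b α)
    (c : Fin (d + 1) → R) : ∑ β, c β • (y β : L) = ∑ α, (U *ᵥ c) α • b α := by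
  simp only [hU]
  exact sum_smul_sum_smul_eq_sum_mulVec_smul b U c

theorem coe_basis_succ_eq_sum_smul_succ (hU : ∀ β, (y β : L) = ∑ α, U α β • b α)
    (hU0 : ∀ i : Fin d, U 0 i.succ = 0) (i : Fin d) :
    (y i.succ : L) = ∑ m : Fin d, U m.succ i.succ • b m.succ := by
  rw [hU, Fin.sum_univ_succ, hU0, zero_smul, zero_add]

theorem sum_smul_coe_basis_succ_eq (hU : ∀ β, (y β : L) = ∑ α, U α β • b α)
    (hU0 : ∀ i : Fin d, U 0 i.succ = 0) (z : Fin d → R) :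
    ∑ l, z l • (y l.succ : L) = ∑ m, (U.submatrix Fin.succ Fin.succ *ᵥ z) m • b m.succ := by
  simp only [coe_basis_succ_eq_sum_smul_succ hU hU0]
  exact sum_smul_sum_smul_eq_sum_mulVec_smul (fun m : Fin d => b m.succ) _ z

theorem det_ne_zero_of_coe_basis_eq [IsDomain R] (hU : ∀ β, (y β : L) = ∑ α, U α β • b α) :
    U.det ≠ 0 := by
  intro hdet
  obtain ⟨c, hc0, hc⟩ := exists_mulVec_eq_zero_iff.2 hdet
  have hy : LinearIndependent R fun β => (y β : L) :=
    y.linearIndependent.map' M.subtype (Submodule.ker_subtype M)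
  refine hc0 (Fintype.linearIndependent_iff.1 hy c ?_ |> funext)
  simp [sum_smul_coe_basis_eq_sum_mulVec_smul hU, hc]

theorem sum_smul_succ_mem_iff [IsDomain R] (hU : ∀ β, (y β : L) = ∑ α, U α β • b α)
    (hU0 : ∀ i : Fin d, U 0 i.succ = 0) (h00 : U 0 0 ≠ 0) (w : Fin d → R) :
    ∑ m, w m • b m.succ ∈ M ↔ ∃ z, U.submatrix Fin.succ Fin.succ *ᵥ z = w := by
  refine ⟨fun hw => ?_, ?_⟩
  · obtain ⟨c, hc⟩ := (M.mem_iff_exists_sum_smul_basis y).1 hw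
    rw [sum_smul_coe_basis_eq_sum_mulVec_smul hU] at hc
    have hcoef : (Fin.cons 0 w : Fin (d + 1) → R) = U *ᵥ c :=
      b.sum_smul_injective (by simpa [Fin.sum_univ_succ] using hc)
    have hrow : ∀ α, (U *ᵥ c) α = U α 0 * c 0 + ∑ l : Fin d, U α l.succ * c l.succ :=
      fun α => by simp [mulVec, dotProduct, Fin.sum_univ_succ]
    have hc00 : c 0 = 0 := by
      have := congrFun hcoef 0
      simp only [Fin.cons_zero, hrow, hU0, zero_mul, Finset.sum_const_zero, add_zero] at this
      exact (mul_eq_zero.1 this.symm).resolve_left h00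
    refine ⟨fun l => c l.succ, funext fun m => ?_⟩
    have := congrFun hcoef m.succ
    simp only [Fin.cons_succ, hrow, hc00, mul_zero, zero_add] at this
    simp [this, mulVec, dotProduct]
  · rintro ⟨z, rfl⟩
    rw [← sum_smul_coe_basis_succ_eq hU hU0]
    exact M.sum_mem fun l _ => M.smul_mem _ (y l.succ).2

end Sublattice

section LieSublattice

variable {R L : Type*} [CommRing R] [LieRing L] [LieAlgebra R L] {d : ℕ}
  {b : Module.Basis (Fin (d + 1)) R L} {M : Submodule R L} {y : Module.Basis (Fin (d + 1)) R M}
  {U : Matrix (Fin (d + 1)) (Fin (d + 1)) R} {A : Matrix (Fin d) (Fin d) R}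

theorem GoodBrackets.lie_coe_basis_succ_succ (hb : GoodBrackets ⇑b A)
    (hU : ∀ β, (y β : L) = ∑ α, U α β • b α) (hU0 : ∀ i : Fin d, U 0 i.succ = 0) (i j : Fin d) :
    ⁅(y i.succ : L), (y j.succ : L)⁆ = 0 := by
  rw [hU i.succ, coe_basis_succ_eq_sum_smul_succ hU hU0 j, hb.lie_sum_smul_sum_smul_succ, hU0,
    zero_smul]

theorem GoodBrackets.lie_coe_basis_zero_succ (hb : GoodBrackets ⇑b A)
    (hU : ∀ β, (y β : L) = ∑ α, U α β • b α) (hU0 : ∀ i : Fin d, U 0 i.succ = 0) (i : Fin d) :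
    ⁅(y 0 : L), (y i.succ : L)⁆ =
      ∑ m, (U 0 0 • (A * U.submatrix Fin.succ Fin.succ)) m i • b m.succ := by
  rw [hU 0, coe_basis_succ_eq_sum_smul_succ hU hU0 i, hb.lie_sum_smul_sum_smul_succ,
    Finset.smul_sum]
  simp [smul_smul, mul_apply, mulVec, dotProduct]

end LieSublattice

theorem stmt_13_general (p : ℕ) [Fact p.Prime] (d : ℕ)
    (L : Type*) [LieRing L] [LieAlgebra ℤ_[p] L]
    (b : Module.Basis (Fin (d + 1)) ℤ_[p] L)
    (A : Matrix (Fin d) (Fin d) ℤ_[p])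
    (hab : ∀ i j : Fin d, ⁅b i.succ, b j.succ⁆ = 0)
    (h0 : ∀ i : Fin d, ⁅b (0 : Fin (d + 1)), b i.succ⁆ = ∑ l : Fin d, A l i • b l.succ)
    (M : Submodule ℤ_[p] L)
    (yb : Module.Basis (Fin (d + 1)) ℤ_[p] ↥M)
    (Ubar : Matrix (Fin (d + 1)) (Fin (d + 1)) ℤ_[p])
    (hU : ∀ β, (yb β : L) = ∑ α, Ubar α β • b α)
    (hU0 : ∀ i : Fin d, Ubar 0 i.succ = 0)
    (B : Matrix (Fin d) (Fin d) ℚ_[p])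
    (hB : B = (Ubar 0 0 : ℚ_[p]) •
      ((Matrix.of fun i j : Fin d => (Ubar i.succ j.succ : ℚ_[p]))⁻¹ *
        (A.map fun r => (r : ℚ_[p])) *
        (Matrix.of fun i j : Fin d => (Ubar i.succ j.succ : ℚ_[p])))) :
    ((∀ u ∈ M, ∀ v ∈ M, ⁅u, v⁆ ∈ M) ↔
        ∀ i j : Fin d, ∃ r : ℤ_[p], (r : ℚ_[p]) = B i j) ∧
    (∀ B' : Matrix (Fin d) (Fin d) ℤ_[p], (B'.map fun r => (r : ℚ_[p])) = B →
      (∀ i j : Fin d, ⁅(yb i.succ : L), (yb j.succ : L)⁆ = 0) ∧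
      ∀ i : Fin d, ⁅(yb (0 : Fin (d + 1)) : L), (yb i.succ : L)⁆ =
        ∑ l : Fin d, B' l i • (yb l.succ : L)) := by
  have hb : GoodBrackets ⇑b A := ⟨hab, h0⟩
  have hdet := det_ne_zero_of_coe_basis_eq hU
  rw [det_eq_mul_det_submatrix_succ_of_row_zero Ubar hU0] at hdet
  have hf : Function.Injective (PadicInt.Coe.ringHom (p := p)) := Subtype.coe_injective
  have hsolve : ∀ Z, Ubar.submatrix Fin.succ Fin.succ * Z =
      Ubar 0 0 • (A * Ubar.submatrix Fin.succ Fin.succ) ↔ Z.map PadicInt.Coe.ringHom = B := by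
    intro Z
    rw [mul_eq_iff_map_eq_inv_mul _ hf ((map_ne_zero_iff _ hf).2 (right_ne_zero_of_mul hdet)), hB,
      Matrix.map_smul' _ _ _ (map_mul _), Matrix.map_mul, Matrix.mul_smul, Matrix.mul_assoc]
    rfl
  refine ⟨?_, fun B' hB' => ⟨hb.lie_coe_basis_succ_succ hU hU0, fun i => ?_⟩⟩
  · rw [M.lie_mem_iff_lie_zero_succ_mem yb (hb.lie_coe_basis_succ_succ hU hU0)]
    simp only [hb.lie_coe_basis_zero_succ hU hU0,
      sum_smul_succ_mem_iff hU hU0 (left_ne_zero_of_mul hdet)]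
    rw [← exists_mul_eq_iff_forall_exists_mulVec_eq]
    simp only [hsolve]
    exact exists_map_eq_iff _ B
  · rw [hb.lie_coe_basis_zero_succ hU hU0, ← (hsolve B').2 hB', sum_smul_coe_basis_succ_eq hU hU0]
    simp [mul_apply, mulVec, dotProduct]

/-- Let `L` be a `(d+1)`-dimensional `ℤ_p`-Lie lattice with good basis
`(x₀,…,x_d)` and matrix `A`, and `M` a finite-index submodule with basis `(y₀,…,y_d)`
whose change-of-basis matrix `Ū` satisfies `U_{0i} = 0` for `i ∈ {1,…,d}`. With
`U = (U_{ij})_{1≤i,j≤d}` and `B = U₀₀ U⁻¹ A U` over `ℚ_p`: `M` is a Lie subalgebra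
iff `B` has entries in `ℤ_p`, and in that case `(y₀,…,y_d)` is a good basis of `M`
with matrix `B`. -/
theorem stmt_13 (p : ℕ) [Fact p.Prime] (d : ℕ)
    (L : Type*) [LieRing L] [LieAlgebra ℤ_[p] L]
    (b : Module.Basis (Fin (d + 1)) ℤ_[p] L)
    (A : Matrix (Fin d) (Fin d) ℤ_[p])
    (hab : ∀ i j : Fin d, ⁅b i.succ, b j.succ⁆ = 0)
    (h0 : ∀ i : Fin d, ⁅b (0 : Fin (d + 1)), b i.succ⁆ = ∑ l : Fin d, A l i • b l.succ)
    (M : Submodule ℤ_[p] L)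
    (hfin : 0 < Nat.card (L ⧸ M))
    (yb : Module.Basis (Fin (d + 1)) ℤ_[p] ↥M)
    (Ubar : Matrix (Fin (d + 1)) (Fin (d + 1)) ℤ_[p])
    (hU : ∀ β, (yb β : L) = ∑ α, Ubar α β • b α)
    (hU0 : ∀ i : Fin d, Ubar 0 i.succ = 0)
    (B : Matrix (Fin d) (Fin d) ℚ_[p])
    (hB : B = (Ubar 0 0 : ℚ_[p]) •
      ((Matrix.of fun i j : Fin d => (Ubar i.succ j.succ : ℚ_[p]))⁻¹ *
        (A.map fun r => (r : ℚ_[p])) *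
        (Matrix.of fun i j : Fin d => (Ubar i.succ j.succ : ℚ_[p])))) :
    ((∀ u ∈ M, ∀ v ∈ M, ⁅u, v⁆ ∈ M) ↔
        ∀ i j : Fin d, ∃ r : ℤ_[p], (r : ℚ_[p]) = B i j) ∧
    (∀ B' : Matrix (Fin d) (Fin d) ℤ_[p], (B'.map fun r => (r : ℚ_[p])) = B →
      (∀ i j : Fin d, ⁅(yb i.succ : L), (yb j.succ : L)⁆ = 0) ∧
      ∀ i : Fin d, ⁅(yb (0 : Fin (d + 1)) : L), (yb i.succ : L)⁆ =
        ∑ l : Fin d, B' l i • (yb l.succ : L)) :=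
  stmt_13_general p d L b A hab h0 M yb Ubar hU hU0 B hB
end

section
/- Let L, M be (d+1)-dimensional ℤ_p-Lie lattices with good bases (x₀,...,x_d), (y₀,...,y_d) and matrices A, B respectively, and let φ : M → L be a module homomorphism with matrix F̄ (φ(y_β) = Σ_α F_{αβ} x_α). If φ is a Lie algebra homomorphism and dim[M,M] = d, then F_{0i} = 0 for all i ∈ {1,...,d}. -/
/-!
The coordinate functional `x₀*` of a good basis vanishes on all brackets, so both `y₀*` and
`x₀* ∘ φ` vanish on `[M, M]`. The map `Φ = (y₀*, x₀* ∘ φ) : M → ℤ_p²` sends `y₀` and `yᵢ` to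
`(1, F₀₀)` and `(0, F₀ᵢ)`; if `F₀ᵢ ≠ 0` these are independent, so the quotient of `M` (rank
`d + 1`) by `[M, M] ⊆ ker Φ` has rank at least 2, contradicting `rank [M, M] = d`.
-/

open Module

theorem Module.Basis.map_lie_eq_zero {R L V ι : Type*} [CommRing R] [LieRing L] [LieAlgebra R L]
    [AddCommGroup V] [Module R V] (b : Basis ι R L) (f : L →ₗ[R] V)
    (h : ∀ α β, f ⁅b α, b β⁆ = 0) (u v : L) : f ⁅u, v⁆ = 0 := by
  let B : L →ₗ[R] L →ₗ[R] V := LinearMap.mk₂ R (fun u v => f ⁅u, v⁆)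
    (fun _ _ _ => by rw [add_lie, map_add]) (fun _ _ _ => by rw [smul_lie, map_smul])
    (fun _ _ _ => by rw [lie_add, map_add]) (fun _ _ _ => by rw [lie_smul, map_smul])
  have hB : B = 0 := LinearMap.ext_basis b b h
  exact LinearMap.congr_fun₂ hB u v

structure Module.Basis.IsGood {R L : Type*} [CommRing R] [LieRing L] [LieAlgebra R L] {d : ℕ}
    (b : Basis (Fin (d + 1)) R L) (A : Matrix (Fin d) (Fin d) R) : Prop where
  lie_succ_succ : ∀ i j : Fin d, ⁅b i.succ, b j.succ⁆ = 0
  lie_zero_succ : ∀ i : Fin d, ⁅b 0, b i.succ⁆ = ∑ l : Fin d, A l i • b l.succ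

namespace Module.Basis.IsGood

variable {R L : Type*} [CommRing R] [LieRing L] [LieAlgebra R L] {d : ℕ}
  {b : Basis (Fin (d + 1)) R L} {A : Matrix (Fin d) (Fin d) R}

theorem coord_zero_lie_zero_succ (hb : b.IsGood A) (i : Fin d) :
    b.coord 0 ⁅b 0, b i.succ⁆ = 0 := by
  simp [hb.lie_zero_succ i, Fin.succ_ne_zero]

theorem coord_zero_lie (hb : b.IsGood A) (u v : L) : b.coord 0 ⁅u, v⁆ = 0 := by
  refine b.map_lie_eq_zero _ (fun α β => ?_) u v
  cases α using Fin.cases <;> cases β using Fin.cases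
  · simp
  · exact hb.coord_zero_lie_zero_succ _
  · rw [← lie_skew, map_neg, hb.coord_zero_lie_zero_succ, neg_zero]
  · simp [hb.lie_succ_succ]

end Module.Basis.IsGood

theorem Submodule.finrank_add_card_le_of_le_ker {R M P ι : Type*} [CommRing R] [IsDomain R]
    [AddCommGroup M] [Module R M] [Module.Finite R M] [AddCommGroup P] [Module R P]
    {N : Submodule R M} {f : M →ₗ[R] P} (hN : N ≤ LinearMap.ker f) [Fintype ι] {v : ι → M}
    (hv : LinearIndependent R (f ∘ v)) : finrank R N + Fintype.card ι ≤ finrank R M := by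
  have hq : LinearIndependent R (N.mkQ ∘ v) := by
    refine .of_comp (N.liftQ f hN) ?_
    rwa [← Function.comp_assoc, ← LinearMap.coe_comp, N.liftQ_mkQ]
  have := hq.fintype_card_le_finrank
  have := N.finrank_quotient_add_finrank
  omega

theorem Prod.linearIndependent_pair {R : Type*} [CommRing R] [NoZeroDivisors R] (a : R) {c : R}
    (hc : c ≠ 0) : LinearIndependent R ![((1 : R), a), (0, c)] := by
  rw [LinearIndependent.pair_iff]
  intro s t hst
  have hs : s = 0 := by simpa using congrArg Prod.fst hst
  subst hs
  simpa [hc] using congrArg Prod.snd hst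

/-- Let `L, M` be `(d+1)`-dimensional `ℤ_p`-Lie lattices with good
bases and matrices `A, B`, and `φ : M → L` a module homomorphism with matrix `F̄`.
If `φ` is a Lie algebra homomorphism and `dim [M,M] = d`, then `F_{0i} = 0` for all
`i ∈ {1,…,d}`. -/
theorem stmt_14 (p : ℕ) [Fact p.Prime] (d : ℕ)
    (L M : Type*) [LieRing L] [LieAlgebra ℤ_[p] L] [LieRing M] [LieAlgebra ℤ_[p] M]
    (bx : Module.Basis (Fin (d + 1)) ℤ_[p] L)
    (A : Matrix (Fin d) (Fin d) ℤ_[p])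
    (hxab : ∀ i j : Fin d, ⁅bx i.succ, bx j.succ⁆ = 0)
    (hx0 : ∀ i : Fin d, ⁅bx (0 : Fin (d + 1)), bx i.succ⁆ = ∑ l : Fin d, A l i • bx l.succ)
    (bY : Module.Basis (Fin (d + 1)) ℤ_[p] M)
    (B : Matrix (Fin d) (Fin d) ℤ_[p])
    (hyab : ∀ i j : Fin d, ⁅bY i.succ, bY j.succ⁆ = 0)
    (hy0 : ∀ i : Fin d, ⁅bY (0 : Fin (d + 1)), bY i.succ⁆ = ∑ l : Fin d, B l i • bY l.succ)
    (φ : M →ₗ⁅ℤ_[p]⁆ L)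
    (Fbar : Matrix (Fin (d + 1)) (Fin (d + 1)) ℤ_[p])
    (hF : ∀ β, φ (bY β) = ∑ α, Fbar α β • bx α)
    (hMM : Module.finrank ℤ_[p]
      ↥(Submodule.span ℤ_[p] {z : M | ∃ u v : M, ⁅u, v⁆ = z}) = d) :
    ∀ i : Fin d, Fbar 0 i.succ = 0 := by
  intro i
  by_contra hne
  have hx : bx.IsGood A := ⟨hxab, hx0⟩
  have hy : bY.IsGood B := ⟨hyab, hy0⟩
  let Φ : M →ₗ[ℤ_[p]] ℤ_[p] × ℤ_[p] := (bY.coord 0).prod ((bx.coord 0).comp φ.toLinearMap)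
  have hΦ : ∀ β, Φ (bY β) = (if β = 0 then 1 else 0, Fbar 0 β) := fun β => by
    simp [Φ, hF, Finsupp.single_apply]
  have hker : Submodule.span ℤ_[p] {z : M | ∃ u v : M, ⁅u, v⁆ = z} ≤ LinearMap.ker Φ := by
    rw [Submodule.span_le]
    rintro _ ⟨u, v, rfl⟩
    simp [Φ, hy.coord_zero_lie, hx.coord_zero_lie]
  have hind : LinearIndependent ℤ_[p] (Φ ∘ ![bY 0, bY i.succ]) := by
    convert Prod.linearIndependent_pair (Fbar 0 0) hne using 1
    ext k : 1
    fin_cases k <;> simp [hΦ, Fin.succ_ne_zero]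
  have := Module.Finite.of_basis bY
  have hrank := Submodule.finrank_add_card_le_of_le_ker hker hind
  rw [hMM, finrank_eq_card_basis bY, Fintype.card_fin, Fintype.card_fin] at hrank
  omega
end

section
/- In the setting of (d+1)-dimensional metabelian ℤ_p-Lie lattices L, M with good bases and matrices A, B: if the matrix F̄ of a module homomorphism φ : M → L satisfies F_{0i} = 0 for all i ∈ {1,...,d}, then φ is a Lie algebra homomorphism if and only if F B = F₀₀ A F, where F = (F_{ij})_{1 ≤ i,j ≤ d}. -/
/-!
Both sides of `φ ⁅u, v⁆ = ⁅φ u, φ v⁆` are bilinear in `(u, v)`, so it suffices to check it on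
pairs of basis vectors. The span of `y₁, …, y_d` is abelian and, because `F_{0i} = 0`, `φ` maps it
into the abelian span of `x₁, …, x_d`; by antisymmetry only the pairs `(y₀, y_j)` remain. There
`φ ⁅y₀, y_j⁆` has coordinates the `j`-th column of `F B`, while in `⁅φ y₀, φ y_j⁆` the
`x₁, …, x_d`-components of `φ y₀` bracket trivially with `φ y_j`, leaving `F₀₀` times the `j`-th
column of `A F`.
-/

open Matrix

theorem LinearMap.map_lie_iff_forall_basis {R ι M L : Type*} [CommRing R]
    [LieRing M] [LieAlgebra R M] [LieRing L] [LieAlgebra R L]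
    (b : Module.Basis ι R M) (φ : M →ₗ[R] L) :
    (∀ u v : M, φ ⁅u, v⁆ = ⁅φ u, φ v⁆) ↔ ∀ i j, φ ⁅b i, b j⁆ = ⁅φ (b i), φ (b j)⁆ := by
  refine ⟨fun h i j => h _ _, fun h u v => ?_⟩
  have hext := LinearMap.ext_basis b b
    (B := (LieModule.toEnd R M M : M →ₗ[R] Module.End R M).compr₂ φ)
    (B' := (LieModule.toEnd R L L : L →ₗ[R] Module.End R L).compl₁₂ φ φ) (by simpa using h)
  simpa using LinearMap.congr_fun₂ hext u v

theorem lie_sum_smul_sum_smul_eq_zero {R L ι : Type*} [CommRing R] [LieRing L] [LieAlgebra R L]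
    [Fintype ι] {v : ι → L} (hv : ∀ i j, ⁅v i, v j⁆ = 0) (c c' : ι → R) :
    ⁅∑ i, c i • v i, ∑ j, c' j • v j⁆ = 0 := by
  simp [sum_lie, lie_sum, smul_lie, lie_smul, hv]

theorem LinearMap.map_eq_sum_mul_apply_smul {R M N ι κ μ : Type*} [CommSemiring R]
    [AddCommMonoid M] [Module R M] [AddCommMonoid N] [Module R N] [Fintype ι] [Fintype κ]
    (f : M →ₗ[R] N) {v : ι → N} {w : κ → M} {u : μ → M}
    (F : Matrix ι κ R) (B : Matrix κ μ R)
    (hf : ∀ k, f (w k) = ∑ i, F i k • v i) (hu : ∀ j, u j = ∑ k, B k j • w k) (j : μ) :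
    f (u j) = ∑ i, (F * B) i j • v i := by
  simp only [hu, map_sum, map_smul, hf, Finset.smul_sum, smul_smul, mul_apply, Finset.sum_smul]
  rw [Finset.sum_comm]
  simp only [mul_comm]

theorem LinearIndependent.sum_apply_smul_eq_iff {R M ι κ : Type*} [CommSemiring R]
    [AddCommMonoid M] [Module R M] [Fintype ι] {v : ι → M} (hv : LinearIndependent R v)
    (P Q : Matrix ι κ R) :
    (∀ j, ∑ i, P i j • v i = ∑ i, Q i j • v i) ↔ P = Q := by
  refine ⟨fun h => ext fun i j => Fintype.linearIndependent_iffₛ.mp hv _ _ (h j) i, ?_⟩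
  rintro rfl j
  rfl

/-- In the setting of `(d+1)`-dimensional metabelian `ℤ_p`-Lie
lattices `L, M` with good bases and matrices `A, B`: if the matrix `F̄` of a module
homomorphism `φ : M → L` satisfies `F_{0i} = 0` for all `i ∈ {1,…,d}`, then `φ` is a
Lie algebra homomorphism iff `F B = F₀₀ A F`, where `F` is the lower-right `d×d`
block of `F̄`. -/
theorem stmt_15 (p : ℕ) [Fact p.Prime] (d : ℕ)
    (L M : Type*) [LieRing L] [LieAlgebra ℤ_[p] L] [LieRing M] [LieAlgebra ℤ_[p] M]
    (bx : Module.Basis (Fin (d + 1)) ℤ_[p] L)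
    (A : Matrix (Fin d) (Fin d) ℤ_[p])
    (hxab : ∀ i j : Fin d, ⁅bx i.succ, bx j.succ⁆ = 0)
    (hx0 : ∀ i : Fin d, ⁅bx (0 : Fin (d + 1)), bx i.succ⁆ = ∑ l : Fin d, A l i • bx l.succ)
    (bY : Module.Basis (Fin (d + 1)) ℤ_[p] M)
    (B : Matrix (Fin d) (Fin d) ℤ_[p])
    (hyab : ∀ i j : Fin d, ⁅bY i.succ, bY j.succ⁆ = 0)
    (hy0 : ∀ i : Fin d, ⁅bY (0 : Fin (d + 1)), bY i.succ⁆ = ∑ l : Fin d, B l i • bY l.succ)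
    (φ : M →ₗ[ℤ_[p]] L)
    (Fbar : Matrix (Fin (d + 1)) (Fin (d + 1)) ℤ_[p])
    (hF : ∀ β, φ (bY β) = ∑ α, Fbar α β • bx α)
    (hF0 : ∀ i : Fin d, Fbar 0 i.succ = 0)
    (F : Matrix (Fin d) (Fin d) ℤ_[p])
    (hFdef : ∀ i j : Fin d, F i j = Fbar i.succ j.succ) :
    (∀ u v : M, φ ⁅u, v⁆ = ⁅φ u, φ v⁆) ↔ F * B = Fbar 0 0 • (A * F) := by
  have hφ : ∀ j : Fin d, φ (bY j.succ) = ∑ l, F l j • bx l.succ := fun j => by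
    simp [hF, Fin.sum_univ_succ, hF0, hFdef]
  have hlhs (j : Fin d) : φ ⁅bY 0, bY j.succ⁆ = ∑ l, (F * B) l j • bx l.succ :=
    φ.map_eq_sum_mul_apply_smul F B hφ hy0 j
  have hrhs (j : Fin d) :
      ⁅φ (bY 0), φ (bY j.succ)⁆ = ∑ l, (Fbar 0 0 • (A * F)) l j • bx l.succ := by
    have had : ⁅bx 0, φ (bY j.succ)⁆ = ∑ l, (A * F) l j • bx l.succ :=
      (LieModule.toEnd ℤ_[p] L L (bx 0) : L →ₗ[ℤ_[p]] L).map_eq_sum_mul_apply_smul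
        A F hx0 hφ j
    rw [hF 0, Fin.sum_univ_succ, add_lie, hφ, lie_sum_smul_sum_smul_eq_zero hxab, add_zero,
      smul_lie, ← hφ]
    simp only [had, Finset.smul_sum, smul_smul, Matrix.smul_apply, smul_eq_mul]
  have hsucc (i j : Fin d) : φ ⁅bY i.succ, bY j.succ⁆ = ⁅φ (bY i.succ), φ (bY j.succ)⁆ := by
    rw [hyab, map_zero, hφ, hφ, lie_sum_smul_sum_smul_eq_zero hxab]
  have hskew (i : Fin d) : φ ⁅bY i.succ, bY 0⁆ = ⁅φ (bY i.succ), φ (bY 0)⁆ ↔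
      φ ⁅bY 0, bY i.succ⁆ = ⁅φ (bY 0), φ (bY i.succ)⁆ := by
    rw [← lie_skew, ← lie_skew (φ _), map_neg, neg_inj]
  rw [φ.map_lie_iff_forall_basis bY,
    ← (bx.linearIndependent.comp _ (Fin.succ_injective d)).sum_apply_smul_eq_iff]
  simp [Fin.forall_fin_succ, hsucc, hskew, hlhs, hrhs]
end
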